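/- Let Y be the topological disjoint union of the discrete spaces ℤ/2ⁿℤ for n ∈ ℕ, and let the profinite group ℤ₂ of 2-adic integers act on each ℤ/2ⁿℤ by translation through the quotient map ℤ₂ → ℤ/2ⁿℤ, hence on Y. For each g ∈ ℤ₂ the translation map Y → Y extends uniquely to a continuous map of the Stone–Čech compactification βY, giving an action of the group ℤ₂ on βY by homeomorphisms. Then the resulting action map ℤ₂ × βY → βY is not continuous (jointly in the two variables). -/

import Mathlib

/-- The disjoint union `Y` of the discrete spaces `ℤ/2ⁿℤ`, `n ∈ ℕ`. -/
abbrev Y2adic : Type := Σ n : ℕ, ZMod (2 ^ n)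

/-- `Y` carries the discrete topology (a disjoint union of discrete spaces is discrete). -/
instance : TopologicalSpace Y2adic := ⊥

instance : DiscreteTopology Y2adic := ⟨rfl⟩

/-- The 2-adic integers act on each `ℤ/2ⁿℤ` by translation through the quotient maps
`ℤ₂ → ℤ/2ⁿℤ`, hence on the disjoint union `Y`. -/
noncomputable def yTranslate (g : ℤ_[2]) : Y2adic → Y2adic :=
  fun y => ⟨y.1, PadicInt.toZModPow y.1 g + y.2⟩

/-- For each `g ∈ ℤ₂` the translation of `Y` extends (uniquely) to a continuous map of the
Stone–Čech compactification `βY`. -/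
noncomputable def padicAct (g : ℤ_[2]) : StoneCech Y2adic → StoneCech Y2adic :=
  stoneCechExtend
    (show Continuous fun y : Y2adic => stoneCechUnit (yTranslate g y) from
      continuous_stoneCechUnit.comp continuous_of_discreteTopology)

lemma padicAct_unit (g : ℤ_[2]) (y : Y2adic) :
    padicAct g (stoneCechUnit y) = stoneCechUnit (yTranslate g y) :=
  congrFun (stoneCechExtend_extends _) y

lemma padicAct_zero : padicAct 0 = id := by
  apply stoneCech_hom_ext (continuous_stoneCechExtend _) continuous_id
  funext y
  show padicAct 0 (stoneCechUnit y) = stoneCechUnit y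
  rw [padicAct_unit]
  congr 1
  simp [yTranslate]

lemma eq_of_mapClusterPt_tendsto {X : Type*} [TopologicalSpace X] [T2Space X]
    {u : ℕ → X} {a b : X} (h : MapClusterPt a Filter.atTop u)
    (h' : Filter.Tendsto u Filter.atTop (nhds b)) : a = b :=
  eq_of_nhds_neBot (h.clusterPt.mono h')

/-- The induced action map `ℤ₂ × βY → βY` is not jointly continuous. -/
theorem padicAct_not_jointly_continuous :
    ¬ Continuous (fun p : ℤ_[2] × StoneCech Y2adic => padicAct p.1 p.2) := by
  intro hcont
  -- indicator of "second coordinate is zero", extended to βY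
  have hf : Continuous (fun y : Y2adic => decide (y.2 = 0)) :=
    continuous_of_discreteTopology
  set F : StoneCech Y2adic → Bool := stoneCechExtend hf with hF
  have hFunit : ∀ y : Y2adic, F (stoneCechUnit y) = decide (y.2 = 0) :=
    fun y => congrFun (stoneCechExtend_extends hf) y
  -- the sequence (2^n, ⟨n+1, 0⟩)
  set u : ℕ → ℤ_[2] × StoneCech Y2adic :=
    fun n => ((2 : ℤ_[2]) ^ n, stoneCechUnit (⟨n + 1, 0⟩ : Y2adic)) with hu
  obtain ⟨p, hp⟩ := exists_clusterPt_of_compactSpace (Filter.map u Filter.atTop)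
  have hp' : MapClusterPt p Filter.atTop u := hp
  -- first coordinate clusters at 0, so p.1 = 0
  have hgz : Filter.Tendsto (fun n : ℕ => (2 : ℤ_[2]) ^ n) Filter.atTop (nhds 0) := by
    apply tendsto_pow_atTop_nhds_zero_of_norm_lt_one
    have h2 : ((2 : ℕ) : ℤ_[2]) = (2 : ℤ_[2]) := by norm_cast
    rw [← h2, PadicInt.norm_p]
    norm_num
  have hp1 : MapClusterPt p.1 Filter.atTop (fun n => (2 : ℤ_[2]) ^ n) :=
    hp'.continuousAt_comp continuous_fst.continuousAt
  have hp1z : p.1 = 0 := eq_of_mapClusterPt_tendsto hp1 hgz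
  -- second coordinate clusters at p.2
  have hp2 : MapClusterPt p.2 Filter.atTop (fun n => stoneCechUnit (⟨n + 1, 0⟩ : Y2adic)) :=
    hp'.continuousAt_comp continuous_snd.continuousAt
  -- F p.2 = true
  have htrue : MapClusterPt (F p.2) Filter.atTop
      (fun n => F (stoneCechUnit (⟨n + 1, 0⟩ : Y2adic))) :=
    hp2.continuousAt_comp (continuous_stoneCechExtend hf).continuousAt
  have hFt : F p.2 = true := by
    have : (fun n : ℕ => F (stoneCechUnit (⟨n + 1, 0⟩ : Y2adic))) = fun _ => true := by
      funext n; rw [hFunit]; simp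
    rw [this] at htrue
    exact eq_of_mapClusterPt_tendsto htrue tendsto_const_nhds
  -- F (a p) clusters at the values F (a (u n)) which are all false
  have ha := hp'.continuousAt_comp hcont.continuousAt
  have hact := ha.continuousAt_comp (continuous_stoneCechExtend hf).continuousAt
  have hval : ∀ n : ℕ, F (padicAct (u n).1 (u n).2) = false := by
    intro n
    rw [hu]
    simp only [padicAct_unit, hFunit]
    simp only [yTranslate, add_zero]
    have : (PadicInt.toZModPow (n + 1)) ((2 : ℤ_[2]) ^ n) ≠ 0 := by
      have h2 : ((2 : ℕ) : ℤ_[2]) = (2 : ℤ_[2]) := by norm_cast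
      rw [← h2, ← Nat.cast_pow, map_natCast]
      rw [Ne, ZMod.natCast_eq_zero_iff]
      intro hdvd
      have hle := Nat.le_of_dvd (Nat.pow_pos (n := n) (by norm_num)) hdvd
      have hlt : (2 : ℕ) ^ n < 2 ^ (n + 1) := Nat.pow_lt_pow_succ one_lt_two
      omega
    show decide ((PadicInt.toZModPow (n + 1)) ((2 : ℤ_[2]) ^ n) + 0 = 0) = false
    simpa using this
  have hFf : F (padicAct p.1 p.2) = false := by
    have hseq : (F ∘ ((fun q : ℤ_[2] × StoneCech Y2adic => padicAct q.1 q.2) ∘ u))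
        = fun _ => false := funext hval
    rw [hseq] at hact
    exact eq_of_mapClusterPt_tendsto hact tendsto_const_nhds
  rw [hp1z, padicAct_zero] at hFf
  simp only [id_eq] at hFf
  rw [hFt] at hFf
  exact Bool.noConfusion hFf
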